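/- arXiv:1412.3080 — 2 statements merged into one kernel-verified Lean document; each statement's English description precedes it below -/
import Mathlib

section
/- Let r, n, k be positive integers with k ≥ 2, n a sparsely Schemmel totient number of order r, and ω(n) ≥ k. Then Q_{k−1}(n) > λ_k(r)·(P_k(n) − r), where P_k(n) is the k-th largest prime divisor of n, Q_{k−1}(n) is the (k−1)-th smallest prime greater than r not dividing n, and λ_k(r) is the unique positive real root of (J_r/r)·x^k + k·x − (k−1). -/
/-- The Schemmel totient function of order `r` (multiplicative, with
`S r (p^a) = p^(a-1) * (p - r)`; note `p - r = 0` in `ℕ` when `p ≤ r`). -/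
def S (r n : ℕ) : ℕ := ∏ q ∈ n.primeFactors, q ^ (n.factorization q - 1) * (q - r)

/-- `b r` is the number of primes `≤ r`. -/
def b (r : ℕ) : ℕ := ((Finset.range (r + 1)).filter Nat.Prime).card

/-- `p i` is the `i`-th prime (`p 1 = 2`, `p 2 = 3`, ...). -/
noncomputable def p (i : ℕ) : ℕ := Nat.nth Nat.Prime (i - 1)

/-- `n` is a sparsely Schemmel totient number of order `r`. -/
def SST (r n : ℕ) : Prop := 0 < S r n ∧ ∀ m : ℕ, n < m → 0 < S r m → S r n < S r m

/-- Jacobsthal function: the smallest `a` such that every `a` consecutive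
integers contain one coprime to `N`. -/
noncomputable def J (N : ℕ) : ℕ := sInf {a : ℕ | ∀ x : ℕ, ∃ y ∈ Finset.Ico x (x + a), Nat.Coprime y N}

/-- `Pk k n` is the `k`-th largest prime divisor of `n` (or `0` if `ω(n) < k`). -/
def Pk (k n : ℕ) : ℕ := ((n.primeFactors.sort (· ≤ ·)).reverse).getD (k - 1) 0

/-- `Qk r k n` is the `k`-th smallest prime greater than `r` not dividing `n`. -/
noncomputable def Qk (r k n : ℕ) : ℕ := Nat.nth (fun q : ℕ => q.Prime ∧ r < q ∧ ¬ q ∣ n) (k - 1)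

/-- `Rn n` is `n` divided by the product of its distinct prime factors. -/
def Rn (n : ℕ) : ℕ := n / ∏ q ∈ n.primeFactors, q

/-! Suppose `λ (P_k(n) - r) ≥ Q_{k-1}(n)`. Replace the `k` largest prime factors of `n` (the set
`T`, product `P`) by the `k - 1` smallest primes `> r` not dividing `n` (the set `T'`, product
`C`) and by a number `v` coprime to `r#` taken from the `J_r` integers just above `P / C`. The
result `m` exceeds `n`, while
`S_r(m) ≤ v ∏_{T'} (q - r) S_r(n / P) ≤ ∏_T (q - r) S_r(n / P) ≤ S_r(n)`,
contradicting sparseness. Such a `v` exists once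
`P / C + J_r ≤ ∏_T (q - r) / ∏_{T'} (q - r)`. With `x = P_k(n) - r` and `y = λ x`, every
`q ∈ T` is `≥ x + r` and every `q ∈ T'` is `≤ y`, so
`1 + t ≤ eᵗ` bounds `∏_T q / (q - r)` by `e^a` and `∏_{T'} (q - r) / q` by `e^(-b)`, where
`a = k r / x` and `b = (k - 1) r / y`; this reduces the inequality to
`J_r ≤ x^k / y^(k-1) (b - a)`, and the equation defining `λ` makes the two sides equal. -/

open Finset Real

lemma S_mul_prime (r : ℕ) {a q : ℕ} (ha : a ≠ 0) (hq : q.Prime) :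
    S r (a * q) = S r a * if q ∣ a then q else q - r := by
  have hfac : (a * q).factorization = a.factorization + Finsupp.single q 1 := by
    rw [Nat.factorization_mul ha hq.ne_zero, hq.factorization]
  have hpf : (a * q).primeFactors = insert q a.primeFactors := by
    rw [Nat.primeFactors_mul ha hq.ne_zero, hq.primeFactors, union_comm]; rfl
  have hrest : ∀ s : Finset ℕ, q ∉ s →
      ∏ p ∈ s, p ^ ((a * q).factorization p - 1) * (p - r) =
        ∏ p ∈ s, p ^ (a.factorization p - 1) * (p - r) := by
    refine fun s hs ↦ prod_congr rfl fun p hp ↦ ?_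
    simp [hfac, (ne_of_mem_of_not_mem hp hs).symm]
  unfold S
  split_ifs with hd
  · have hmem : q ∈ a.primeFactors := Nat.mem_primeFactors.mpr ⟨hq, hd, ha⟩
    obtain ⟨e, he⟩ : ∃ e, a.factorization q = e + 1 :=
      ⟨_, (Nat.sub_add_cancel (hq.factorization_pos_of_dvd ha hd)).symm⟩
    rw [hpf, insert_eq_of_mem hmem, ← mul_prod_erase _ _ hmem, ← mul_prod_erase _ _ hmem,
      hrest _ (notMem_erase q _), hfac, Finsupp.add_apply, Finsupp.single_eq_same, he]
    simp only [Nat.add_sub_cancel]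
    ring
  · have hnm : q ∉ a.primeFactors := fun h ↦ hd (Nat.dvd_of_mem_primeFactors h)
    rw [hpf, prod_insert hnm, hrest _ hnm, hfac, Finsupp.add_apply, Finsupp.single_eq_same,
      Nat.factorization_eq_zero_of_not_dvd hd]
    ring

lemma S_mul_le (r : ℕ) {a v : ℕ} (ha : a ≠ 0) (hv : v ≠ 0) : S r (a * v) ≤ v * S r a := by
  induction v using Nat.recOnMul generalizing a with
  | zero => exact absurd rfl hv
  | one => simp
  | prime q hq =>
    rw [S_mul_prime r ha hq, mul_comm]
    split_ifs
    · rfl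
    · exact Nat.mul_le_mul_right _ (Nat.sub_le q r)
  | mul b c ihb ihc =>
    obtain ⟨hb, hc⟩ := mul_ne_zero_iff.mp hv
    calc S r (a * (b * c)) = S r (a * b * c) := by rw [mul_assoc]
      _ ≤ c * S r (a * b) := ihc (mul_ne_zero ha hb) hc
      _ ≤ c * (b * S r a) := Nat.mul_le_mul_left _ (ihb ha hb)
      _ = b * c * S r a := by ring

lemma mul_S_le_S_mul_prod (r : ℕ) {a : ℕ} (ha : a ≠ 0) {T : Finset ℕ}
    (hT : ∀ q ∈ T, q.Prime) :
    (∏ q ∈ T, (q - r)) * S r a ≤ S r (a * ∏ q ∈ T, q) := by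
  induction T using Finset.induction_on generalizing a with
  | empty => simp
  | insert q T hq ih =>
    have hqp := hT q (mem_insert_self q T)
    rw [prod_insert hq, prod_insert hq, ← mul_assoc a, mul_comm (q - r), mul_assoc]
    refine (Nat.mul_le_mul_left _ ?_).trans
      (ih (mul_ne_zero ha hqp.ne_zero) fun q' hq' ↦ hT q' (mem_insert_of_mem hq'))
    rw [S_mul_prime r ha hqp, mul_comm (q - r)]
    split_ifs
    · exact Nat.mul_le_mul_left _ (Nat.sub_le q r)
    · rfl

lemma S_mul_prod_of_not_dvd (r : ℕ) {a : ℕ} (ha : a ≠ 0) {T : Finset ℕ}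
    (hT : ∀ q ∈ T, q.Prime ∧ ¬ q ∣ a) :
    S r (a * ∏ q ∈ T, q) = (∏ q ∈ T, (q - r)) * S r a := by
  induction T using Finset.induction_on generalizing a with
  | empty => simp
  | insert q T hq ih =>
    obtain ⟨hqp, hqa⟩ := hT q (mem_insert_self q T)
    have hT' : ∀ q' ∈ T, q'.Prime ∧ ¬ q' ∣ a * q := by
      intro q' hq'
      obtain ⟨hq'p, hq'a⟩ := hT q' (mem_insert_of_mem hq')
      refine ⟨hq'p, fun hdvd ↦ ?_⟩
      rcases hq'p.dvd_mul.mp hdvd with h | h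
      · exact hq'a h
      · exact hq (((Nat.prime_dvd_prime_iff_eq hq'p hqp).mp h) ▸ hq')
    rw [prod_insert hq, prod_insert hq, ← mul_assoc a, ih (mul_ne_zero ha hqp.ne_zero) hT',
      S_mul_prime r ha hqp, if_neg hqa]
    ring

lemma S_pos_iff (r m : ℕ) : 0 < S r m ↔ ∀ q ∈ m.primeFactors, r < q := by
  rw [S, Nat.pos_iff_ne_zero, prod_ne_zero_iff]
  refine forall₂_congr fun q hq ↦ ?_
  rw [mul_ne_zero_iff, Nat.sub_ne_zero_iff_lt,
    and_iff_right (pow_ne_zero _ (Nat.prime_of_mem_primeFactors hq).ne_zero)]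

lemma card_filter_orderEmbOfFin_le {α : Type*} [LinearOrder α] (s : Finset α) (i : Fin #s) :
    #{x ∈ s | s.orderEmbOfFin rfl i ≤ x} = #s - i := by
  have hrange := s.range_orderEmbOfFin rfl
  have hfilter : {x ∈ s | s.orderEmbOfFin rfl i ≤ x} =
      (Ici i).map (s.orderEmbOfFin rfl).toEmbedding := by
    ext x
    simp only [mem_filter, mem_map, mem_Ici, RelEmbedding.coe_toEmbedding]
    constructor
    · rintro ⟨hx, hix⟩
      obtain ⟨j, rfl⟩ : x ∈ Set.range (s.orderEmbOfFin rfl) := hrange ▸ hx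
      exact ⟨j, (s.orderEmbOfFin rfl).le_iff_le.mp hix, rfl⟩
    · rintro ⟨j, hij, rfl⟩
      exact ⟨s.orderEmbOfFin_mem rfl j, (s.orderEmbOfFin rfl).le_iff_le.mpr hij⟩
  rw [hfilter, card_map, Fin.card_Ici]

lemma Pk_eq_orderEmbOfFin {k n : ℕ} (hk : 1 ≤ k) (hkn : k ≤ #n.primeFactors) :
    Pk k n = n.primeFactors.orderEmbOfFin rfl ⟨#n.primeFactors - k, by omega⟩ := by
  rw [orderEmbOfFin_apply, Pk, List.getD_eq_getElem _ _ (by simp; omega), List.getElem_reverse]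
  congr 1
  simp
  omega

lemma Pk_mem_primeFactors {k n : ℕ} (hk : 1 ≤ k) (hkn : k ≤ #n.primeFactors) :
    Pk k n ∈ n.primeFactors := by
  rw [Pk_eq_orderEmbOfFin hk hkn]
  exact orderEmbOfFin_mem _ _ _

lemma card_filter_Pk_le {k n : ℕ} (hk : 1 ≤ k) (hkn : k ≤ #n.primeFactors) :
    #{q ∈ n.primeFactors | Pk k n ≤ q} = k := by
  rw [Pk_eq_orderEmbOfFin hk hkn, card_filter_orderEmbOfFin_le]
  simp only
  omega

lemma card_filter_range_nth_succ {P : ℕ → Prop} [DecidablePred P] (hP : {x | P x}.Infinite)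
    (i : ℕ) : #{x ∈ range (Nat.nth P i + 1) | P x} = i + 1 := by
  rw [← Nat.count_eq_card_filter_range, Nat.count_succ, Nat.count_nth_of_infinite hP,
    if_pos (Nat.nth_mem_of_infinite hP i)]

lemma infinite_setOf_prime_gt_not_dvd (r : ℕ) {n : ℕ} (hn : n ≠ 0) :
    {q : ℕ | q.Prime ∧ r < q ∧ ¬ q ∣ n}.Infinite := by
  refine Set.infinite_of_forall_exists_gt fun a ↦ ?_
  obtain ⟨q, hq, hqp⟩ := Nat.exists_infinite_primes (a + r + n + 1)
  have hqn : ¬ q ∣ n := fun h ↦ by have := Nat.le_of_dvd (Nat.pos_of_ne_zero hn) h; omega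
  exact ⟨q, ⟨hqp, by omega, hqn⟩, by omega⟩

lemma card_filter_le_Qk {r n j : ℕ} (hn : n ≠ 0) (hj : 1 ≤ j) :
    #{q ∈ range (Qk r j n + 1) | q.Prime ∧ r < q ∧ ¬ q ∣ n} = j := by
  obtain ⟨i, rfl⟩ := Nat.exists_eq_add_of_le' hj
  exact card_filter_range_nth_succ (infinite_setOf_prime_gt_not_dvd r hn) i

lemma prod_le_prod_sub_mul_exp {ι : Type*} (s : Finset ι) (f : ι → ℝ) {r x : ℝ}
    (hr : 0 ≤ r) (hx : 0 < x) (hf : ∀ i ∈ s, x + r ≤ f i) :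
    ∏ i ∈ s, f i ≤ (∏ i ∈ s, (f i - r)) * exp (r / x) ^ #s := by
  rw [← prod_const, ← prod_mul_distrib]
  refine prod_le_prod (fun i hi ↦ by linarith [hf i hi]) fun i hi ↦ ?_
  have hfi := hf i hi
  have hr' : r ≤ (f i - r) * (r / x) := by
    rw [mul_div_assoc', le_div_iff₀ hx]; nlinarith
  calc f i ≤ (f i - r) * (1 + r / x) := by linarith
    _ ≤ (f i - r) * exp (r / x) := by
      gcongr
      · linarith
      · linarith [add_one_le_exp (r / x)]

lemma prod_sub_le_prod_mul_exp_neg {ι : Type*} (s : Finset ι) (f : ι → ℝ) {r y : ℝ}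
    (hr : 0 ≤ r) (hy : 0 < y) (hf : ∀ i ∈ s, r ≤ f i ∧ f i ≤ y) :
    ∏ i ∈ s, (f i - r) ≤ (∏ i ∈ s, f i) * exp (-(r / y)) ^ #s := by
  rw [← prod_const, ← prod_mul_distrib]
  refine prod_le_prod (fun i hi ↦ by linarith [hf i hi]) fun i hi ↦ ?_
  obtain ⟨hrf, hfy⟩ := hf i hi
  have hr' : f i * (r / y) ≤ r := by
    rw [mul_div_assoc', div_le_iff₀ hy]; nlinarith
  calc f i - r ≤ f i * (1 - r / y) := by linarith
    _ ≤ f i * exp (-(r / y)) := by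
      gcongr
      · linarith
      · linarith [add_one_le_exp (-(r / y))]

lemma div_add_mul_sub_le_div {P A B C g a b : ℝ} (hA : 0 ≤ A) (hB : 0 < B) (hC : 0 < C)
    (ha : 0 ≤ a) (hab : a ≤ b) (hPA : P ≤ A * exp a) (hBC : B ≤ C * exp (-b))
    (hg : g * exp b ≤ A / B) :
    P / C + g * (b - a) ≤ A / B := by
  have hPC : P / C ≤ A / B * exp (a - b) := by
    rw [div_le_iff₀ hC, sub_eq_add_neg, exp_add]
    calc P ≤ A * exp a := hPA
      _ = A / B * exp a * B := by field_simp
      _ ≤ A / B * exp a * (C * exp (-b)) := by gcongr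
      _ = _ := by ring
  have hexp : b - a ≤ exp b - exp a := by
    have h1 : 1 ≤ exp a := one_le_exp ha
    have h2 : b - a + 1 ≤ exp (b - a) := add_one_le_exp _
    have h3 : exp b = exp a * exp (b - a) := by rw [← exp_add]; ring_nf
    nlinarith
  have hgab : g * (b - a) ≤ A / B * (1 - exp (a - b)) :=
    calc g * (b - a) = g * exp b * (exp (-b) * (b - a)) := by
          rw [← mul_assoc, mul_assoc g, ← exp_add]; simp
      _ ≤ A / B * (exp (-b) * (exp b - exp a)) := by gcongr
      _ = A / B * (1 - exp (a - b)) := by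
          rw [mul_sub, ← exp_add, ← exp_add]; ring_nf; simp
  linarith

lemma prod_div_prod_add_le {T T' : Finset ℕ} {r x y : ℝ} (hr : 0 ≤ r) (hx : 0 < x)
    (hy : 0 < y) (hT : ∀ q ∈ T, x + r ≤ q) (hT' : ∀ q ∈ T', r < q ∧ q ≤ y)
    (hcard : #T * r / x ≤ #T' * r / y) :
    (∏ q ∈ T, (q : ℝ)) / (∏ q ∈ T', (q : ℝ)) +
        x ^ #T / y ^ #T' * (#T' * r / y - #T * r / x) ≤
      (∏ q ∈ T, ((q : ℝ) - r)) / ∏ q ∈ T', ((q : ℝ) - r) := by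
  have hA : x ^ #T ≤ ∏ q ∈ T, ((q : ℝ) - r) := by
    rw [← prod_const]
    exact prod_le_prod (fun _ _ ↦ hx.le) fun q hq ↦ by linarith [hT q hq]
  have hC : ∏ q ∈ T', (q : ℝ) ≤ y ^ #T' := by
    rw [← prod_const]
    exact prod_le_prod (fun q hq ↦ by linarith [hT' q hq]) fun q hq ↦ (hT' q hq).2
  have hB : 0 < ∏ q ∈ T', ((q : ℝ) - r) := prod_pos fun q hq ↦ by linarith [hT' q hq]
  have hBC := prod_sub_le_prod_mul_exp_neg T' (fun q : ℕ ↦ (q : ℝ)) hr hy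
    fun q hq ↦ ⟨(hT' q hq).1.le, (hT' q hq).2⟩
  rw [← exp_nat_mul, mul_neg, mul_div_assoc'] at hBC
  have hPA := prod_le_prod_sub_mul_exp T (fun q : ℕ ↦ (q : ℝ)) hr hx hT
  rw [← exp_nat_mul, mul_div_assoc'] at hPA
  refine div_add_mul_sub_le_div (hA.trans' (by positivity)) hB
    (prod_pos fun q hq ↦ by linarith [hT' q hq]) (by positivity) hcard hPA hBC ?_
  rw [le_div_iff₀ hB]
  calc x ^ #T / y ^ #T' * exp (#T' * r / y) * ∏ q ∈ T', ((q : ℝ) - r)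
      ≤ x ^ #T / y ^ #T' * exp (#T' * r / y) * (y ^ #T' * exp (-(#T' * r / y))) := by
        gcongr
        exact hBC.trans (by gcongr)
    _ = x ^ #T := by
        rw [mul_mul_mul_comm, ← exp_add, add_neg_cancel, exp_zero, mul_one,
          div_mul_cancel₀ _ (by positivity)]
    _ ≤ _ := hA

lemma J_eq_of_root {k : ℕ} (hk : 1 ≤ k) {J r lam x : ℝ} (hr : 0 < r) (hlam : 0 < lam)
    (hx : 0 < x) (hroot : J / r * lam ^ k + k * lam - (k - 1) = 0) :
    x ^ k / (lam * x) ^ (k - 1) * ((k - 1 : ℕ) * r / (lam * x) - k * r / x) = J := by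
  obtain ⟨k, rfl⟩ := Nat.exists_eq_add_of_le' hk
  push_cast at hroot ⊢
  field_simp at hroot ⊢
  linear_combination (-x ^ (k + 1)) * hroot

lemma exists_coprime_mem_Ico_J {N : ℕ} (hN : 0 < N) (x : ℕ) :
    ∃ y ∈ Ico x (x + J N), y.Coprime N := by
  refine Nat.sInf_mem (s := {a | ∀ x, ∃ y ∈ Ico x (x + a), y.Coprime N})
    ⟨N + 2, fun x ↦ ?_⟩ x
  refine ⟨N * (x / N + 1) + 1, mem_Ico.2 ⟨?_, ?_⟩, by simp⟩
  · have := Nat.lt_mul_div_succ x hN; omega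
  · have := Nat.mul_div_le x N; rw [mul_add]; omega

lemma exists_coprime_lt_mul_of_div_add_J_le {N : ℕ} (hN : 0 < N) {P C A B : ℕ} (hC : 0 < C)
    (hB : 0 < B) (h : (P : ℝ) / C + J N ≤ (A : ℝ) / B) :
    ∃ v, v.Coprime N ∧ P < C * v ∧ v * B ≤ A := by
  obtain ⟨v, hv, hcop⟩ := exists_coprime_mem_Ico_J hN (P / C + 1)
  rw [mem_Ico] at hv
  refine ⟨v, hcop, by rw [mul_comm, ← Nat.div_lt_iff_lt_mul hC]; omega, ?_⟩
  have hvJ : (v : ℝ) ≤ (P / C : ℕ) + J N := by exact_mod_cast (by omega : v ≤ P / C + J N)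
  have hvAB : (v : ℝ) ≤ A / B := by linarith [Nat.cast_div_le (α := ℝ) (m := P) (n := C)]
  rw [le_div_iff₀ (by exact_mod_cast hB)] at hvAB
  exact_mod_cast hvAB

lemma lt_of_prime_dvd_of_coprime_primorial {r v q : ℕ} (hv : v.Coprime (primorial r))
    (hq : q.Prime) (hqv : q ∣ v) : r < q := by
  by_contra! hle
  exact hq.one_lt.ne' ((hv.coprime_dvd_left hqv).eq_one_of_dvd (hq.dvd_primorial_iff.2 hle))

lemma exists_gt_S_le {r n : ℕ} (hn : n ≠ 0) (hSn : 0 < S r n) {T T' : Finset ℕ}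
    (hT : T ⊆ n.primeFactors) (hT' : ∀ q ∈ T', q.Prime ∧ r < q ∧ ¬ q ∣ n) {v : ℕ}
    (hv : v.Coprime (primorial r)) (hlt : ∏ q ∈ T, q < (∏ q ∈ T', q) * v)
    (hle : v * ∏ q ∈ T', (q - r) ≤ ∏ q ∈ T, (q - r)) :
    ∃ m, n < m ∧ 0 < S r m ∧ S r m ≤ S r n := by
  have hTp : ∀ q ∈ T, q.Prime := fun q hq ↦ Nat.prime_of_mem_primeFactors (hT hq)
  have hdvd : ∏ q ∈ T, q ∣ n :=
    (prod_dvd_prod_of_subset _ _ _ hT).trans (Nat.prod_primeFactors_dvd n)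
  obtain ⟨a, rfl⟩ : ∃ a, n = a * ∏ q ∈ T, q := ⟨_, (Nat.div_mul_cancel hdvd).symm⟩
  have ha : a ≠ 0 := left_ne_zero_of_mul hn
  have hv0 : v ≠ 0 := by rintro rfl; simp at hlt
  have hC : ∏ q ∈ T', q ≠ 0 := prod_ne_zero_iff.2 fun q hq ↦ (hT' q hq).1.ne_zero
  have hT'a : ∀ q ∈ T', q.Prime ∧ ¬ q ∣ a :=
    fun q hq ↦ ⟨(hT' q hq).1, fun h ↦ (hT' q hq).2.2 (h.trans (dvd_mul_right a _))⟩
  refine ⟨a * (∏ q ∈ T', q) * v, ?_, ?_, ?_⟩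
  · rw [mul_assoc]
    exact Nat.mul_lt_mul_of_pos_left hlt (Nat.pos_of_ne_zero ha)
  · rw [S_pos_iff] at hSn ⊢
    intro q hq
    rw [Nat.primeFactors_mul (mul_ne_zero ha hC) hv0, Nat.primeFactors_mul ha hC,
      Nat.primeFactors_prod fun q hq ↦ (hT' q hq).1, mem_union, mem_union] at hq
    rcases hq with (hqa | hqT') | hqv
    · exact hSn q (Nat.primeFactors_mono (dvd_mul_right a _) hn hqa)
    · exact (hT' q hqT').2.1
    · exact lt_of_prime_dvd_of_coprime_primorial hv (Nat.prime_of_mem_primeFactors hqv)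
        (Nat.dvd_of_mem_primeFactors hqv)
  · calc S r (a * (∏ q ∈ T', q) * v)
        ≤ v * S r (a * ∏ q ∈ T', q) := S_mul_le r (mul_ne_zero ha hC) hv0
      _ = v * (∏ q ∈ T', (q - r)) * S r a := by rw [S_mul_prod_of_not_dvd r ha hT'a, mul_assoc]
      _ ≤ (∏ q ∈ T, (q - r)) * S r a := Nat.mul_le_mul_right _ hle
      _ ≤ S r (a * ∏ q ∈ T, q) := mul_S_le_S_mul_prod r ha hTp

lemma cast_prod_sub {R : Type*} [CommRing R] {s : Finset ℕ} {r : ℕ} (h : ∀ q ∈ s, r ≤ q) :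
    ((∏ q ∈ s, (q - r) : ℕ) : R) = ∏ q ∈ s, ((q : R) - r) := by
  rw [Nat.cast_prod]
  exact prod_congr rfl fun q hq ↦ Nat.cast_sub (h q hq)

theorem stmt13 (r n k : ℕ) (hr : 0 < r) (hk : 2 ≤ k) (h : SST r n)
    (hω : k ≤ n.primeFactors.card) (lam : ℝ) (hlam : 0 < lam)
    (hroot : ((J (primorial r) : ℝ) / r) * lam ^ k + k * lam - (k - 1) = 0) :
    lam * ((Pk k n : ℝ) - r) < (Qk r (k - 1) n : ℝ) := by
  by_contra! hQ
  have hn : n ≠ 0 := by rintro rfl; simp at hω; omega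
  have hrn := (S_pos_iff r n).1 h.1
  set T := {q ∈ n.primeFactors | Pk k n ≤ q}
  set T' := {q ∈ range (Qk r (k - 1) n + 1) | q.Prime ∧ r < q ∧ ¬ q ∣ n}
  have hTcard : #T = k := card_filter_Pk_le (by omega) hω
  have hT'card : #T' = k - 1 := card_filter_le_Qk hn (by omega)
  have hT' : ∀ q ∈ T', q.Prime ∧ r < q ∧ ¬ q ∣ n := fun q hq ↦ (mem_filter.1 hq).2
  set x : ℝ := Pk k n - r
  have hx : 0 < x := by
    have := hrn _ (Pk_mem_primeFactors (by omega) hω)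
    simp only [x, sub_pos]; exact_mod_cast this
  have hTx : ∀ q ∈ T, x + r ≤ q := fun q hq ↦ by
    simp only [x, sub_add_cancel]; exact_mod_cast (mem_filter.1 hq).2
  have hT'y : ∀ q ∈ T', (r : ℝ) < q ∧ (q : ℝ) ≤ lam * x := fun q hq ↦ by
    have hqQ : q ≤ Qk r (k - 1) n := Nat.le_of_lt_succ (mem_range.1 (mem_filter.1 hq).1)
    exact ⟨by exact_mod_cast (hT' q hq).2.1, hQ.trans' (by exact_mod_cast hqQ)⟩
  have hJ := J_eq_of_root (x := x) (by omega) (by exact_mod_cast hr) hlam hx hroot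
  have hcard : (k * r / x : ℝ) ≤ (k - 1 : ℕ) * r / (lam * x) := by
    have := hJ ▸ (Nat.cast_nonneg (J (primorial r)) : (0 : ℝ) ≤ J (primorial r))
    exact sub_nonneg.1 (nonneg_of_mul_nonneg_right this (by positivity))
  have key := prod_div_prod_add_le (Nat.cast_nonneg r) hx (by positivity) hTx hT'y
    (by rwa [hTcard, hT'card])
  rw [hTcard, hT'card, hJ, ← cast_prod_sub fun q hq ↦ (hrn q (filter_subset _ _ hq)).le,
    ← cast_prod_sub fun q hq ↦ (hT' q hq).2.1.le, ← Nat.cast_prod, ← Nat.cast_prod] at key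
  obtain ⟨v, hv, hlt, hle⟩ := exists_coprime_lt_mul_of_div_add_J_le (primorial_pos r)
    (prod_pos fun q hq ↦ (hT' q hq).1.pos)
    (prod_pos fun q hq ↦ Nat.sub_pos_of_lt (hT' q hq).2.1) key
  obtain ⟨m, hnm, hm, hSm⟩ := exists_gt_S_le hn h.1 (filter_subset _ _) hT' hv hlt hle
  exact (h.2 m hnm hm).not_ge hSm
end

section
/- Let r be a positive integer. If n ∈ B_r and t > b(r) is the unique integer with ∏_{i=b(r)+1}^{t} p_i ≤ n < ∏_{i=b(r)+1}^{t+1} p_i, then ω(n) ≤ t − b(r) and S_r(n) ≥ ∏_{i=b(r)+1}^{t} (p_i − r). -/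
/-!
Every prime factor of `n ∈ B_r` exceeds `r`, so if `n` has `k` of them, listed increasingly,
the `j`-th one is at least the `j`-th prime above `r`. Comparing factor by factor, the product
of the first `k` primes above `r` is at most `rad n ≤ n`, which bounds `k` by the choice of `t`;
and since `x ↦ 1 - r / x` is increasing, `∏ (1 - r / p_i) ≤ ∏_{q ∣ n} (1 - r / q) = S_r(n) / n`,
which together with `∏_{i ≤ t} p_i ≤ n` gives the lower bound for `S_r(n)`.
-/

open Finset Nat

namespace Nat

variable {p : ℕ → Prop} [DecidablePred p] {a : ℕ}

theorem nth_count_add_card_le (hp : (Set.ofPred p).Infinite) {s : Finset ℕ} {y : ℕ}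
    (hs : ∀ x ∈ s, p x ∧ a ≤ x ∧ x < y) (hy : p y) (hay : a ≤ y) :
    nth p (count p a + #s) ≤ y := by
  have hdisj : Disjoint ((range a).filter p) s :=
    disjoint_left.2 fun x hx hxs => by
      have := (hs x hxs).2.1
      simp only [mem_filter, mem_range] at hx
      omega
  have hsub : (range a).filter p ∪ s ⊆ (range y).filter p := by
    intro x hx
    rcases mem_union.1 hx with hx | hx
    · simp only [mem_filter, mem_range] at hx ⊢
      exact ⟨by omega, hx.2⟩
    · obtain ⟨hpx, -, hxy⟩ := hs x hx
      exact mem_filter.2 ⟨mem_range.2 hxy, hpx⟩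
  have hcount : count p a + #s ≤ count p y := by
    rw [count_eq_card_filter_range, count_eq_card_filter_range, ← card_union_of_disjoint hdisj]
    exact card_le_card hsub
  calc nth p (count p a + #s) ≤ nth p (count p y) := (nth_le_nth hp).2 hcount
    _ = y := nth_count hy

/-- With `eⱼ := nth p (count p a + j)` the `j`-th element of `p` from `a` on, this is
`∏ⱼ (u / v) eⱼ ≤ ∏_{x ∈ s} (u / v) x` for `u / v` monotone, cleared of denominators. -/
theorem prod_range_nth_mul_prod_le (hp : (Set.ofPred p).Infinite) {u v : ℕ → ℕ}
    (huv : ∀ x y, x ≤ y → u x * v y ≤ v x * u y) {s : Finset ℕ} (hs : ∀ x ∈ s, p x ∧ a ≤ x) :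
    (∏ j ∈ range #s, u (nth p (count p a + j))) * ∏ x ∈ s, v x ≤
      (∏ j ∈ range #s, v (nth p (count p a + j))) * ∏ x ∈ s, u x := by
  induction s using Finset.induction_on_max with
  | empty => simp
  | insert m s hlt ih =>
    have hm := hs m (mem_insert_self m s)
    have hs' : ∀ x ∈ s, p x ∧ a ≤ x := fun x hx => hs x (mem_insert_of_mem hx)
    have hle : nth p (count p a + #s) ≤ m :=
      nth_count_add_card_le hp (fun x hx => ⟨(hs' x hx).1, (hs' x hx).2, hlt x hx⟩) hm.1 hm.2
    have hms : m ∉ s := fun h => (hlt m h).false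
    rw [card_insert_of_notMem hms, prod_range_succ, prod_range_succ, prod_insert hms,
      prod_insert hms]
    convert Nat.mul_le_mul (ih hs') (huv _ _ hle) using 1 <;> ring

theorem prod_range_nth_le_prod (hp : (Set.ofPred p).Infinite) {s : Finset ℕ}
    (hs : ∀ x ∈ s, p x ∧ a ≤ x) :
    ∏ j ∈ range #s, nth p (count p a + j) ≤ ∏ x ∈ s, x := by
  simpa using
    prod_range_nth_mul_prod_le hp (u := id) (v := 1) (fun x y hxy => by simpa using hxy) hs

theorem prod_range_nth_mul_prod_le_of_card_le (hp : (Set.ofPred p).Infinite) {u v : ℕ → ℕ}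
    (huv : ∀ x y, x ≤ y → u x * v y ≤ v x * u y) (hle : ∀ x, u x ≤ v x) {s : Finset ℕ}
    (hs : ∀ x ∈ s, p x ∧ a ≤ x) {m : ℕ} (hm : #s ≤ m) :
    (∏ j ∈ range m, u (nth p (count p a + j))) * ∏ x ∈ s, v x ≤
      (∏ j ∈ range m, v (nth p (count p a + j))) * ∏ x ∈ s, u x := by
  rw [← prod_range_mul_prod_Ico _ hm, ← prod_range_mul_prod_Ico _ hm]
  convert Nat.mul_le_mul (prod_range_nth_mul_prod_le hp huv hs)
    (prod_le_prod' fun j (_ : j ∈ Ico #s m) => hle (nth p (count p a + j))) using 1 <;> ring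

theorem sub_mul_le_mul_sub (r : ℕ) {x y : ℕ} (hxy : x ≤ y) : (x - r) * y ≤ x * (y - r) := by
  rcases le_or_gt x r with hxr | hrx
  · simp [Nat.sub_eq_zero_of_le hxr]
  · rw [Nat.sub_mul, Nat.mul_sub, Nat.mul_comm x r]
    exact Nat.sub_le_sub_left (Nat.mul_le_mul_left r hxy) _

end Nat

theorem b_eq_count (r : ℕ) : b r = count Nat.Prime (r + 1) := by
  rw [b, count_eq_card_filter_range]

theorem prod_Icc_p_eq_prod_range {M : Type*} [CommMonoid M] (f : ℕ → M) (r m : ℕ) :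
    ∏ i ∈ Icc (b r + 1) m, f (p i) =
      ∏ j ∈ range (m - b r), f (nth Nat.Prime (count Nat.Prime (r + 1) + j)) := by
  rw [← Ico_add_one_right_eq_Icc, prod_Ico_eq_prod_range, Nat.add_sub_add_right, b_eq_count]
  refine prod_congr rfl fun j _ => ?_
  rw [p, Nat.add_right_comm, Nat.add_sub_cancel]

theorem lt_of_mem_primeFactors_of_S_pos {r n q : ℕ} (hn : 0 < S r n)
    (hq : q ∈ n.primeFactors) : r < q := by
  have := prod_ne_zero_iff.1 hn.ne' q hq
  simp only [ne_eq, Nat.mul_eq_zero, not_or] at this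
  omega

theorem S_mul_prod_primeFactors (r : ℕ) {n : ℕ} (hn : n ≠ 0) :
    S r n * ∏ q ∈ n.primeFactors, q = n * ∏ q ∈ n.primeFactors, (q - r) := by
  have hpow : ∀ q ∈ n.primeFactors, q ^ (n.factorization q - 1) * q = q ^ n.factorization q :=
    fun q hq => by
      rw [← pow_succ, Nat.sub_add_cancel]
      exact (prime_of_mem_primeFactors hq).factorization_pos_of_dvd hn (dvd_of_mem_primeFactors hq)
  calc S r n * ∏ q ∈ n.primeFactors, q
      = ∏ q ∈ n.primeFactors, (q ^ (n.factorization q - 1) * q * (q - r)) := by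
        rw [S, ← prod_mul_distrib]
        exact prod_congr rfl fun q _ => by ring
    _ = n * ∏ q ∈ n.primeFactors, (q - r) := by
        rw [prod_congr rfl fun q hq => congrArg (· * (q - r)) (hpow q hq), prod_mul_distrib,
          ← Nat.prod_primeFactors_pow_factorization hn]

theorem stmt19_general (r n t : ℕ) (hn : 0 < S r n)
    (h1 : ∏ i ∈ Finset.Icc (b r + 1) t, p i ≤ n)
    (h2 : n < ∏ i ∈ Finset.Icc (b r + 1) (t + 1), p i) :
    n.primeFactors.card ≤ t - b r ∧
    ∏ i ∈ Finset.Icc (b r + 1) t, (p i - r) ≤ S r n := by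
  have hn0 : n ≠ 0 := by
    refine (lt_of_lt_of_le (prod_pos fun i _ => ?_) h1).ne'
    exact (prime_nth_prime _).pos
  have hQ : ∀ q ∈ n.primeFactors, q.Prime ∧ r + 1 ≤ q := fun q hq =>
    ⟨prime_of_mem_primeFactors hq, lt_of_mem_primeFactors_of_S_pos hn hq⟩
  have hQn : ∏ q ∈ n.primeFactors, q ≤ n :=
    le_of_dvd (pos_of_ne_zero hn0) (prod_primeFactors_dvd n)
  rw [prod_Icc_p_eq_prod_range (fun x : ℕ => x)] at h1 h2
  rw [prod_Icc_p_eq_prod_range (· - r)]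
  have hcard : n.primeFactors.card ≤ t - b r := by
    by_contra! h
    have hlonger := prod_le_prod_of_subset_of_one_le'
      (range_subset_range.2 (show t + 1 - b r ≤ #n.primeFactors by omega))
      fun j _ _ => (prime_nth_prime (count Nat.Prime (r + 1) + j)).one_le
    have hrad := prod_range_nth_le_prod (p := Nat.Prime) infinite_setOfPred_prime hQ
    omega
  refine ⟨hcard, Nat.le_of_mul_le_mul_right ?_ (prod_pos fun q hq => (hQ q hq).1.pos)⟩
  calc (∏ j ∈ range (t - b r), (nth Nat.Prime (count Nat.Prime (r + 1) + j) - r)) *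
        ∏ q ∈ n.primeFactors, q
      ≤ (∏ j ∈ range (t - b r), nth Nat.Prime (count Nat.Prime (r + 1) + j)) *
        ∏ q ∈ n.primeFactors, (q - r) :=
      prod_range_nth_mul_prod_le_of_card_le infinite_setOfPred_prime
        (fun _ _ => sub_mul_le_mul_sub r) (fun _ => Nat.sub_le _ r) hQ hcard
    _ ≤ n * ∏ q ∈ n.primeFactors, (q - r) := Nat.mul_le_mul_right _ h1
    _ = S r n * ∏ q ∈ n.primeFactors, q := (S_mul_prod_primeFactors r hn0).symm

theorem stmt19 (r n t : ℕ) (hr : 0 < r) (hn : 0 < S r n) (ht : b r < t)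
    (h1 : ∏ i ∈ Finset.Icc (b r + 1) t, p i ≤ n)
    (h2 : n < ∏ i ∈ Finset.Icc (b r + 1) (t + 1), p i) :
    n.primeFactors.card ≤ t - b r ∧
    ∏ i ∈ Finset.Icc (b r + 1) t, (p i - r) ≤ S r n :=
  stmt19_general r n t hn h1 h2
end
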